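/- arXiv:2001.03089 — 3 statements merged into one kernel-verified Lean document; each statement's English description precedes it below -/
import Mathlib

section
/- Let e be a nonzero error vector in (Fin n → ZMod 2). Under hypotheses (H1) and (H2), the likelihood of e is at most the likelihood of its parent: Q(e) ≤ Q(π(e)). -/
/-!
Let `J = j*(e)`, so `e J = 1`. The parent agrees with `e` except that it clears bit `J` and,
when `J > 0`, sets bit `J - 1`. If that bit was already set (or `J = 0`), only bit `J` changes
and (H1) applies; otherwise a flip moves from `J` to the less reliable `J - 1`, which is (H2).
-/

/-- The index of the least reliable flipped bit: the largest coordinate `j`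
with `e j ≠ 0` (as a natural number; `0` if `e = 0`). -/
def jstar {n : ℕ} (e : Fin n → ZMod 2) : ℕ :=
  (Finset.univ.filter fun j => e j ≠ 0).sup fun j => (j : ℕ)

/-- The parent `π(e)` of an error vector: zero out coordinate `j*(e)` and,
if `j*(e) > 0`, set coordinate `j*(e) - 1` to `1`; `π(0) = 0`. -/
def parent {n : ℕ} (e : Fin n → ZMod 2) : Fin n → ZMod 2 :=
  if e = 0 then 0
  else fun j =>
    if (j : ℕ) = jstar e then 0
    else if 0 < jstar e ∧ (j : ℕ) = jstar e - 1 then 1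
    else e j
/-- Likelihood of an error vector given per-bit likelihoods `q`. -/
noncomputable def Q {n : ℕ} (q : Fin n → ZMod 2 → NNReal) (e : Fin n → ZMod 2) : NNReal :=
  ∏ j, q j (e j)

open Function

section Likelihood

variable {n : ℕ} (q : Fin n → ZMod 2 → NNReal)

theorem Q_le_Q_update (e : Fin n → ZMod 2) (j : Fin n) (b : ZMod 2)
    (h : q j (e j) ≤ q j b) : Q q e ≤ Q q (update e j b) := by
  refine Finset.prod_le_prod' fun i _ => ?_
  rcases eq_or_ne i j with rfl | hij
  · rwa [update_self]
  · rw [update_of_ne hij]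

theorem Q_eq_mul_prod_compl (e : Fin n → ZMod 2) {j l : Fin n} (hjl : j ≠ l) :
    Q q e = q j (e j) * q l (e l) * ∏ i ∈ {j, l}ᶜ, q i (e i) := by
  rw [Q, ← Finset.prod_mul_prod_compl {j, l}, Finset.prod_pair hjl]

theorem Q_le_Q_update_update (e : Fin n → ZMod 2) {j l : Fin n} (hjl : j ≠ l) (a b : ZMod 2)
    (h : q j (e j) * q l (e l) ≤ q j a * q l b) :
    Q q e ≤ Q q (update (update e j a) l b) := by
  have hoff : ∏ i ∈ {j, l}ᶜ, q i (update (update e j a) l b i) = ∏ i ∈ {j, l}ᶜ, q i (e i) := by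
    refine Finset.prod_congr rfl fun i hi => ?_
    simp only [Finset.mem_compl, Finset.mem_insert, Finset.mem_singleton, not_or] at hi
    rw [update_of_ne hi.2, update_of_ne hi.1]
  rw [Q_eq_mul_prod_compl q e hjl, Q_eq_mul_prod_compl q _ hjl, update_self,
    update_of_ne hjl, update_self, hoff]
  exact mul_le_mul_left h _

end Likelihood

theorem zmod_two_eq_zero_or_one : ∀ x : ZMod 2, x = 0 ∨ x = 1 := by decide

theorem exists_val_eq_jstar {n : ℕ} {e : Fin n → ZMod 2} (he : e ≠ 0) :
    ∃ J : Fin n, (J : ℕ) = jstar e ∧ e J = 1 := by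
  classical
  obtain ⟨j, hj⟩ : ∃ j, e j ≠ 0 := by
    by_contra! h
    exact he (funext h)
  obtain ⟨J, hJ, hsup⟩ := Finset.exists_mem_eq_sup (Finset.univ.filter fun i => e i ≠ 0)
    ⟨j, by simpa using hj⟩ fun i => (i : ℕ)
  exact ⟨J, hsup.symm, (zmod_two_eq_zero_or_one _).resolve_left (by simpa using hJ)⟩

theorem parent_eq_update {n : ℕ} {e : Fin n → ZMod 2} (he : e ≠ 0) {J : Fin n}
    (hJ : (J : ℕ) = jstar e) (hJ0 : (J : ℕ) = 0) : parent e = update e J 0 := by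
  rw [parent, if_neg he, ← hJ]
  funext i
  simp only [update_apply, Fin.ext_iff]
  split_ifs <;> first | rfl | omega

theorem parent_eq_update_update {n : ℕ} {e : Fin n → ZMod 2} (he : e ≠ 0) {K J : Fin n}
    (hJ : (J : ℕ) = jstar e) (hKJ : (K : ℕ) + 1 = J) :
    parent e = update (update e K 1) J 0 := by
  rw [parent, if_neg he, ← hJ]
  funext i
  simp only [update_apply, Fin.ext_iff]
  split_ifs <;> first | rfl | omega

theorem likelihood_le_parent_general {n : ℕ} (q : Fin n → ZMod 2 → NNReal)
    (H1 : ∀ j, q j 1 ≤ q j 0)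
    (H2 : ∀ j l : Fin n, j < l → q j 0 * q l 1 ≤ q j 1 * q l 0)
    (e : Fin n → ZMod 2) :
    Q q e ≤ Q q (parent e) := by
  by_cases he : e = 0
  · simp [parent, he]
  obtain ⟨J, hJ, heJ⟩ := exists_val_eq_jstar he
  rcases hk : (J : ℕ) with _ | k
  · rw [parent_eq_update he hJ hk]
    exact Q_le_Q_update q e J 0 (heJ ▸ H1 J)
  set K : Fin n := ⟨k, by omega⟩
  have hKJ : K < J := Fin.lt_def.mpr (by simp [K, hk])
  rw [parent_eq_update_update (K := K) he hJ hk.symm]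
  refine Q_le_Q_update_update q e hKJ.ne 1 0 ?_
  rw [heJ]
  rcases zmod_two_eq_zero_or_one (e K) with h | h <;> rw [h]
  · exact H2 K J hKJ
  · exact mul_le_mul_right (H1 J) _

theorem likelihood_le_parent {n : ℕ} (q : Fin n → ZMod 2 → NNReal)
    (H1 : ∀ j, q j 1 ≤ q j 0)
    (H2 : ∀ j l : Fin n, j < l → q j 0 * q l 1 ≤ q j 1 * q l 0)
    (e : Fin n → ZMod 2) (he : e ≠ 0) :
    Q q e ≤ Q q (parent e) :=
  likelihood_le_parent_general q H1 H2 e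
end

section
/- Let e be a nonzero error vector in (Fin n → ZMod 2). Then iterating the parent map (j*(e) : ℕ) + 1 times starting from e yields the zero vector: π^[(j*(e) : ℕ) + 1](e) = 0. In particular every error vector reaches 0 under iteration of π. -/
/-! Every nonzero coordinate of `π(e)` lies strictly below `j*(e)`, so each application of `π`
lowers `j*` by at least one; after `j*(e)` steps `j* = 0`, and then one more step gives `0`. -/

variable {n : ℕ}

lemma le_jstar {e : Fin n → ZMod 2} {j : Fin n} (h : e j ≠ 0) : (j : ℕ) ≤ jstar e :=
  Finset.le_sup (f := fun j : Fin n => (j : ℕ)) (Finset.mem_filter.2 ⟨Finset.mem_univ _, h⟩)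

lemma lt_jstar_of_parent_apply_ne_zero {e : Fin n → ZMod 2} {j : Fin n}
    (h : parent e j ≠ 0) : (j : ℕ) < jstar e := by
  by_cases he : e = 0
  · simp [parent, he] at h
  simp only [parent, if_neg he] at h
  split_ifs at h with h_top h_below
  · exact absurd rfl h
  · omega
  · have := le_jstar h
    omega

lemma jstar_parent_le (e : Fin n → ZMod 2) : jstar (parent e) ≤ jstar e - 1 :=
  Finset.sup_le fun _ hj =>
    Nat.le_sub_one_of_lt (lt_jstar_of_parent_apply_ne_zero (Finset.mem_filter.1 hj).2)

lemma parent_eq_zero_of_jstar_eq_zero {e : Fin n → ZMod 2} (h : jstar e = 0) : parent e = 0 :=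
  funext fun j => by_contra fun hj => by
    have := lt_jstar_of_parent_apply_ne_zero hj
    omega

lemma jstar_iterate_parent_le (e : Fin n → ZMod 2) (k : ℕ) :
    jstar (parent^[k] e) ≤ jstar e - k := by
  induction k with
  | zero => simp
  | succ k ih =>
    rw [Function.iterate_succ_apply']
    have := jstar_parent_le (parent^[k] e)
    omega

lemma iterate_parent_jstar_succ (e : Fin n → ZMod 2) : parent^[jstar e + 1] e = 0 := by
  rw [Function.iterate_succ_apply']
  apply parent_eq_zero_of_jstar_eq_zero
  simpa using jstar_iterate_parent_le e (jstar e)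

theorem parent_iterate_eq_zero_general {n : ℕ} (e : Fin n → ZMod 2) :
    parent^[jstar e + 1] e = 0 ∧ ∀ v : Fin n → ZMod 2, ∃ k : ℕ, parent^[k] v = 0 :=
  ⟨iterate_parent_jstar_succ e, fun v => ⟨jstar v + 1, iterate_parent_jstar_succ v⟩⟩

theorem parent_iterate_eq_zero {n : ℕ} (e : Fin n → ZMod 2) (he : e ≠ 0) :
    parent^[jstar e + 1] e = 0 ∧ ∀ v : Fin n → ZMod 2, ∃ k : ℕ, parent^[k] v = 0 :=
  parent_iterate_eq_zero_general e
end

section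
/- (Size of the candidate set.) Suppose n ≥ 1 and let (S, e) be an SGRAND run. For every g such that S h is nonempty for all h < g, the candidate set satisfies (S g).card ≤ g + 1; that is, after g queries the set of candidate error vectors contains at most g + 1 elements. -/
/-- `deltaN k` is the vector with a `1` at the coordinate of index `k` and `0` elsewhere. -/
def deltaN {n : ℕ} (k : ℕ) : Fin n → ZMod 2 := fun i => if (i : ℕ) = k then 1 else 0

/-- The children set `C(e)`. -/
def children {n : ℕ} (e : Fin n → ZMod 2) : Finset (Fin n → ZMod 2) :=
  if e = 0 then {deltaN 0}
  else if jstar e = n - 1 then ∅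
  else {e + deltaN (jstar e + 1), e + deltaN (jstar e) + deltaN (jstar e + 1)}
/-- An SGRAND run: `S g` is the candidate set before the `(g+1)`-st query and
`E g` is the `(g+1)`-st queried error vector. -/
def SGRANDRun {n : ℕ} (q : Fin n → ZMod 2 → NNReal)
    (S : ℕ → Finset (Fin n → ZMod 2)) (E : ℕ → Fin n → ZMod 2) : Prop :=
  S 0 = {0} ∧
  ∀ g, (S g).Nonempty →
    E g ∈ S g ∧ (∀ v ∈ S g, Q q v ≤ Q q (E g)) ∧
    S (g + 1) = (S g).erase (E g) ∪ children (E g)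

theorem children_card_le {n : ℕ} (e : Fin n → ZMod 2) : (children e).card ≤ 2 := by
  unfold children
  split_ifs
  · simp
  · simp
  · exact Finset.card_le_two

theorem SGRANDRun.card_succ_le {n : ℕ} {q : Fin n → ZMod 2 → NNReal}
    {S : ℕ → Finset (Fin n → ZMod 2)} {E : ℕ → Fin n → ZMod 2} (hrun : SGRANDRun q S E)
    {g : ℕ} (hg : (S g).Nonempty) : (S (g + 1)).card ≤ (S g).card + 1 := by
  obtain ⟨hmem, -, hstep⟩ := hrun.2 g hg
  have herase : ((S g).erase (E g)).card + 1 = (S g).card := Finset.card_erase_add_one hmem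
  calc (S (g + 1)).card
      ≤ ((S g).erase (E g)).card + (children (E g)).card := hstep ▸ Finset.card_union_le _ _
    _ ≤ (S g).card + 1 := by linarith [children_card_le (E g)]

theorem sgrand_card_general {n : ℕ} (q : Fin n → ZMod 2 → NNReal)
    (S : ℕ → Finset (Fin n → ZMod 2)) (E : ℕ → Fin n → ZMod 2)
    (hrun : SGRANDRun q S E) :
    ∀ g : ℕ, (∀ h < g, (S h).Nonempty) → (S g).card ≤ g + 1 := by
  intro g
  induction g with
  | zero => intro _; simp [hrun.1]
  | succ g ih =>
    intro hne
    have hcard := ih fun h hh => hne h (hh.trans g.lt_succ_self)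
    have hstep := hrun.card_succ_le (hne g g.lt_succ_self)
    omega

theorem sgrand_card {n : ℕ} (hn : 1 ≤ n) (q : Fin n → ZMod 2 → NNReal)
    (S : ℕ → Finset (Fin n → ZMod 2)) (E : ℕ → Fin n → ZMod 2)
    (hrun : SGRANDRun q S E) :
    ∀ g : ℕ, (∀ h < g, (S h).Nonempty) → (S g).card ≤ g + 1 :=
  sgrand_card_general q S E hrun
end
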